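/- arXiv:2307.10832 — 3 statements merged into one kernel-verified Lean document; each statement's English description precedes it below -/
import Mathlib

section
/- In the overdetermined forest fire model with epistemic state K = {u : u ⊨ U_L ∧ (¬U_MD ∨ U_B)}, the conjunction L = 1 ∧ MD = 0 is an original HP explanation of FF = 1. -/
namespace Causal

/-- A causal model: a structural equation for each endogenous variable,
    taking a context (setting of exogenous variables) and a setting of the
    endogenous variables. -/
structure Model (Vu Vv : Type) (Du : Vu → Type) (Dv : Vv → Type) where
  F : (i : Vv) → ((u : Vu) → Du u) → ((j : Vv) → Dv j) → Dv i

variable {Vu Vv : Type} {Du : Vu → Type} {Dv : Vv → Type}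

abbrev Ctx (Du : Vu → Type) := (u : Vu) → Du u
abbrev World (Dv : Vv → Type) := (i : Vv) → Dv i
abbrev Event (Dv : Vv → Type) := World Dv → Prop
/-- A conjunction of primitive events X = x, as a partial assignment. -/
abbrev PA (Dv : Vv → Type) := (i : Vv) → Option (Dv i)

/-- Acyclicity: a well-founded strict order such that each structural equation
    depends only on endogenous variables strictly below it. -/
def Model.Acyclic (M : Model Vu Vv Du Dv) : Prop :=
  ∃ r : Vv → Vv → Prop, WellFounded r ∧
    ∀ (i : Vv) (u : Ctx Du) (s s' : World Dv),
      (∀ j, r j i → s j = s' j) → M.F i u s = M.F i u s'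

/-- s is a solution of the causal setting (M, u). -/
def Model.Solves (M : Model Vu Vv Du Dv) (u : Ctx Du) (s : World Dv) : Prop :=
  ∀ i, s i = M.F i u s

/-- (M, u) ⊨ φ : every solution (in particular the unique actual world) satisfies φ. -/
def Model.sat (M : Model Vu Vv Du Dv) (u : Ctx Du) (φ : Event Dv) : Prop :=
  ∀ s, M.Solves u s → φ s

namespace PA

def event (g : PA Dv) : Event Dv := fun s => ∀ i v, g i = some v → s i = v

def subset (g h : PA Dv) : Prop := ∀ i v, g i = some v → h i = some v

def ssubset (g h : PA Dv) : Prop := subset g h ∧ g ≠ h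

def union (g h : PA Dv) : PA Dv := fun i => (g i).orElse (fun _ => h i)

def sameDom (g h : PA Dv) : Prop := ∀ i, (g i).isSome ↔ (h i).isSome

def Nonempty (g : PA Dv) : Prop := ∃ i, (g i).isSome

def disjoint (g h : PA Dv) : Prop := ∀ i, (g i).isSome → h i = none

/-- Pointwise difference condition: x_i ≠ x_i' for each X_i ∈ X. -/
def diff (g h : PA Dv) : Prop := ∀ i v v', g i = some v → h i = some v' → v ≠ v'

end PA

/-- Intervention M_{X←x}. -/
def Model.intervene (M : Model Vu Vv Du Dv) (g : PA Dv) : Model Vu Vv Du Dv where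
  F i u s := (g i).getD (M.F i u s)

/-- AC1 : (M,u) ⊨ (X = x) ∧ φ. -/
def AC1 (M : Model Vu Vv Du Dv) (u : Ctx Du) (g : PA Dv) (φ : Event Dv) : Prop :=
  M.sat u (fun s => g.event s ∧ φ s)

/-- AC2 : there are W ⊆ V (with its actual setting w) and a setting x' of X with
    (M,u) ⊨ [X ← x', W ← w]¬φ. -/
def AC2 (M : Model Vu Vv Du Dv) (u : Ctx Du) (g : PA Dv) (φ : Event Dv) : Prop :=
  ∃ w x' : PA Dv, x'.sameDom g ∧ M.sat u w.event ∧
    (M.intervene (x'.union w)).sat u (fun s => ¬ φ s)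

/-- Weak actual cause: AC1–AC2. -/
def WeakCause (M : Model Vu Vv Du Dv) (u : Ctx Du) (g : PA Dv) (φ : Event Dv) : Prop :=
  AC1 M u g φ ∧ AC2 M u g φ

/-- Actual cause: AC1–AC3. -/
def ActualCause (M : Model Vu Vv Du Dv) (u : Ctx Du) (g : PA Dv) (φ : Event Dv) : Prop :=
  WeakCause M u g φ ∧ ∀ h : PA Dv, h.ssubset g → ¬ WeakCause M u h φ

/-- X = x is a partial cause (subset of a cause) w.r.t. a notion of cause. -/
def PartialCause (Cause : Model Vu Vv Du Dv → Ctx Du → PA Dv → Event Dv → Prop)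
    (M : Model Vu Vv Du Dv) (u : Ctx Du) (g : PA Dv) (φ : Event Dv) : Prop :=
  ∃ h : PA Dv, g.subset h ∧ Cause M u h φ

/-- Some conjunct of g is part of an actual cause of φ. -/
def IntersectsActualCause (M : Model Vu Vv Du Dv) (u : Ctx Du) (g : PA Dv) (φ : Event Dv) : Prop :=
  ∃ (i : Vv) (v : Dv i) (c : PA Dv), g i = some v ∧ c i = some v ∧ ActualCause M u c φ

/-- Sufficient cause, clauses SC1–SC3. -/
def SuffCauseCore (M : Model Vu Vv Du Dv) (u : Ctx Du) (g : PA Dv) (φ : Event Dv) : Prop :=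
  AC1 M u g φ ∧ IntersectsActualCause M u g φ ∧
    ∀ u' : Ctx Du, (M.intervene g).sat u' φ

/-- Sufficient cause: SC1–SC4. -/
def SuffCause (M : Model Vu Vv Du Dv) (u : Ctx Du) (g : PA Dv) (φ : Event Dv) : Prop :=
  SuffCauseCore M u g φ ∧ ∀ h : PA Dv, h.ssubset g → ¬ SuffCauseCore M u h φ

/-! ### Original HP explanations -/

/-- EX2 : g is a weak actual cause of φ in every plausible context where g holds. -/
def EX2 (M : Model Vu Vv Du Dv) (K : Set (Ctx Du)) (g : PA Dv) (φ : Event Dv) : Prop :=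
  ∀ u ∈ K, M.sat u g.event → WeakCause M u g φ

/-- Original HP explanation: EX1–EX4. -/
def OrigExpl (M : Model Vu Vv Du Dv) (K : Set (Ctx Du)) (g : PA Dv) (φ : Event Dv) : Prop :=
  (∀ u ∈ K, M.sat u φ) ∧
  EX2 M K g φ ∧
  (∀ h : PA Dv, h.ssubset g → ¬ EX2 M K h φ) ∧
  ((∃ u ∈ K, M.sat u (fun s => ¬ g.event s)) ∧ (∃ u' ∈ K, M.sat u' g.event))

/-! ### Modified HP explanations -/

/-- EX1' : (a) g intersects an actual cause in any plausible context where g and φ hold,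
    and (b) g is sufficient to bring about φ in any plausible context. -/
def EX1' (M : Model Vu Vv Du Dv) (K : Set (Ctx Du)) (g : PA Dv) (φ : Event Dv) : Prop :=
  ∀ u ∈ K,
    (M.sat u (fun s => g.event s ∧ φ s) → IntersectsActualCause M u g φ) ∧
    (M.intervene g).sat u φ

/-- Modified HP explanation: EX1'–EX3'. -/
def ModExpl (M : Model Vu Vv Du Dv) (K : Set (Ctx Du)) (g : PA Dv) (φ : Event Dv) : Prop :=
  EX1' M K g φ ∧
  (∀ h : PA Dv, h.ssubset g → ¬ EX1' M K h φ) ∧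
  (∃ u ∈ K, M.sat u (fun s => g.event s ∧ φ s))

/-- EX4' : non-triviality. -/
def EX4' (M : Model Vu Vv Du Dv) (K : Set (Ctx Du)) (g : PA Dv) (φ : Event Dv) : Prop :=
  ∃ u ∈ K, M.sat u (fun s => ¬ g.event s ∧ φ s)

/-- Non-trivial modified HP explanation: EX1'–EX4'. -/
def ModExplNT (M : Model Vu Vv Du Dv) (K : Set (Ctx Du)) (g : PA Dv) (φ : Event Dv) : Prop :=
  ModExpl M K g φ ∧ EX4' M K g φ

/-! ### Borner explanations -/

/-- E1–E2, with witness S = s. -/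
def BornerE12With (M : Model Vu Vv Du Dv) (K : Set (Ctx Du)) (g s : PA Dv) (φ : Event Dv) : Prop :=
  g.disjoint s ∧
  ∀ u ∈ K, (M.sat u g.event → SuffCause M u (g.union s) φ) ∧ M.sat u s.event

def BornerE12 (M : Model Vu Vv Du Dv) (K : Set (Ctx Du)) (g : PA Dv) (φ : Event Dv) : Prop :=
  ∃ s : PA Dv, BornerE12With M K g s φ

/-- Potential Borner explanation: E1–E4. -/
def PotBorner (M : Model Vu Vv Du Dv) (K : Set (Ctx Du)) (g : PA Dv) (φ : Event Dv) : Prop :=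
  BornerE12 M K g φ ∧
  (∃ u ∈ K, M.sat u (fun s => g.event s ∧ φ s)) ∧
  (∃ u ∈ K, M.sat u (fun s => ¬ g.event s ∧ φ s))

/-- Parsimonious potential Borner explanation: E1–E4, E6. -/
def ParsPotBorner (M : Model Vu Vv Du Dv) (K : Set (Ctx Du)) (g : PA Dv) (φ : Event Dv) : Prop :=
  PotBorner M K g φ ∧ ∀ h : PA Dv, h.ssubset g → ¬ BornerE12 M K h φ

/-- Actual Borner explanation: E1–E3, E5. -/
def ActBorner (M : Model Vu Vv Du Dv) (K : Set (Ctx Du)) (g : PA Dv) (φ : Event Dv) : Prop :=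
  BornerE12 M K g φ ∧
  (∃ u ∈ K, M.sat u (fun s => g.event s ∧ φ s)) ∧
  (∀ u ∈ K, M.sat u (fun s => g.event s ∧ φ s))

/-! ### Contrastive causes (CC1–CC5), parameterised by a notion of cause -/

/-- CC1–CC4 for the pair ⟨g, g'⟩ and ⟨φ, ψ⟩. -/
def CCcore (Cause : Model Vu Vv Du Dv → Ctx Du → PA Dv → Event Dv → Prop)
    (M : Model Vu Vv Du Dv) (u : Ctx Du) (g g' : PA Dv) (φ ψ : Event Dv) : Prop :=
  g.sameDom g' ∧
  PartialCause Cause M u g φ ∧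
  M.sat u (fun s => ¬ ψ s) ∧
  (∃ w : PA Dv, w.Nonempty ∧ PartialCause Cause (M.intervene w) u g' ψ) ∧
  g.diff g'

/-- Contrastive cause: CC1–CC5. -/
def ContrastiveCause (Cause : Model Vu Vv Du Dv → Ctx Du → PA Dv → Event Dv → Prop)
    (M : Model Vu Vv Du Dv) (u : Ctx Du) (g g' : PA Dv) (φ ψ : Event Dv) : Prop :=
  CCcore Cause M u g g' φ ψ ∧
  ∀ h h' : PA Dv, g.subset h → g'.subset h' → CCcore Cause M u h h' φ ψ → h = g ∧ h' = g'

/-- Strict refinement of a pair (used for pair-minimality clauses). -/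
def PairSSub (h h' g g' : PA Dv) : Prop :=
  PA.subset h g ∧ PA.subset h' g' ∧ ¬ (h = g ∧ h' = g')

/-! ### Miller contrastive explanations (CE1–CE4) -/

/-- CE2 : contrastive weak actual cause in every plausible context where g holds. -/
def CE2 (M : Model Vu Vv Du Dv) (K : Set (Ctx Du)) (g g' : PA Dv) (φ ψ : Event Dv) : Prop :=
  ∀ u ∈ K, M.sat u g.event → ContrastiveCause WeakCause M u g g' φ ψ

/-- Miller contrastive explanation: CE1–CE4. -/
def MillerCE (M : Model Vu Vv Du Dv) (K : Set (Ctx Du)) (g g' : PA Dv) (φ ψ : Event Dv) : Prop :=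
  (∀ u ∈ K, M.sat u (fun s => φ s ∧ ¬ ψ s)) ∧
  CE2 M K g g' φ ψ ∧
  (∀ h h' : PA Dv, PairSSub h h' g g' → ¬ CE2 M K h h' φ ψ) ∧
  (((∃ u ∈ K, M.sat u (fun s => ¬ g.event s)) ∧ (∃ u' ∈ K, M.sat u' g.event)) ∧
   (∃ w : PA Dv, w.Nonempty ∧ w ≠ g ∧
     (∃ u ∈ K, (M.intervene w).sat u (fun s => ¬ g'.event s)) ∧
     (∃ u' ∈ K, (M.intervene w).sat u' g'.event)))

/-! ### Modular contrastive explanations (Definition 3), parameterised by a notion of explanation -/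

/-- CE1'–CE3'. -/
def ModularCore (Expl : Model Vu Vv Du Dv → Set (Ctx Du) → PA Dv → Event Dv → Prop)
    (M : Model Vu Vv Du Dv) (K : Set (Ctx Du)) (g g' : PA Dv) (φ ψ : Event Dv) : Prop :=
  g.sameDom g' ∧
  (∃ h : PA Dv, g.subset h ∧ Expl M K h φ) ∧
  (∃ w : PA Dv, w.Nonempty ∧ ∃ h : PA Dv, g'.subset h ∧ Expl (M.intervene w) K h ψ) ∧
  g.diff g'

/-- Modular contrastive explanation: CE1'–CE4'. -/
def Modular (Expl : Model Vu Vv Du Dv → Set (Ctx Du) → PA Dv → Event Dv → Prop)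
    (M : Model Vu Vv Du Dv) (K : Set (Ctx Du)) (g g' : PA Dv) (φ ψ : Event Dv) : Prop :=
  ModularCore Expl M K g g' φ ψ ∧
  ∀ h h' : PA Dv, g.subset h → g'.subset h' → ModularCore Expl M K h h' φ ψ → h = g ∧ h' = g'

/-! ### Modified HP contrastive explanations (Definition 1: CH1–CH4) -/

/-- CH1(a)–(c) for a single context u. -/
def CH1abc (M : Model Vu Vv Du Dv) (u : Ctx Du) (g g' : PA Dv) (φ ψ : Event Dv) : Prop :=
  (M.sat u (fun s => g.event s ∧ φ s ∧ ¬ ψ s) →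
    ∃ (i : Vv) (v v' : Dv i) (c c' : PA Dv), g i = some v ∧ g' i = some v' ∧
      c i = some v ∧ c' i = some v' ∧ ContrastiveCause ActualCause M u c c' φ ψ) ∧
  (∃ s s' : PA Dv, s.sameDom s' ∧ g.disjoint s ∧
    (M.intervene (g.union s)).sat u φ ∧
    (∃ w : PA Dv, w.Nonempty ∧ w ≠ g ∧
      ((M.intervene w).intervene (g'.union s')).sat u ψ)) ∧
  g.diff g'

/-- CH1 : for each u ∈ K, (a)–(c) and maximality (d). -/
def CH1 (M : Model Vu Vv Du Dv) (K : Set (Ctx Du)) (g g' : PA Dv) (φ ψ : Event Dv) : Prop :=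
  ∀ u ∈ K, CH1abc M u g g' φ ψ ∧
    ∀ h h' : PA Dv, g.subset h → g'.subset h' → CH1abc M u h h' φ ψ → h = g ∧ h' = g'

/-- Modified HP contrastive explanation: CH1–CH3. -/
def ModCE (M : Model Vu Vv Du Dv) (K : Set (Ctx Du)) (g g' : PA Dv) (φ ψ : Event Dv) : Prop :=
  CH1 M K g g' φ ψ ∧
  (∀ h h' : PA Dv, PairSSub h h' g g' → ¬ CH1 M K h h' φ ψ) ∧
  (∃ u ∈ K, M.sat u (fun s => g.event s ∧ φ s ∧ ¬ ψ s))

/-- CH4 : non-triviality. -/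
def CH4 (M : Model Vu Vv Du Dv) (K : Set (Ctx Du)) (g g' : PA Dv) (φ ψ : Event Dv) : Prop :=
  (∃ u ∈ K, M.sat u (fun s => ¬ g.event s ∧ φ s)) ∧
  (∃ w : PA Dv, w.Nonempty ∧ w ≠ g ∧
    ∃ u ∈ K, (M.intervene w).sat u (fun s => ¬ g'.event s ∧ ψ s))

/-! ### Borner contrastive explanations (Definition 2: CB1–CB6) -/

/-- CB1–CB2 with witness pair ⟨S = s, S = s'⟩. -/
def CB12With (M : Model Vu Vv Du Dv) (K : Set (Ctx Du)) (g g' s s' : PA Dv) (φ ψ : Event Dv) : Prop :=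
  s.sameDom s' ∧ g.disjoint s ∧
  ∀ u ∈ K,
    (M.sat u g.event → ContrastiveCause SuffCause M u (g.union s) (g'.union s') φ ψ) ∧
    M.sat u s.event ∧
    (∃ w : PA Dv, w.Nonempty ∧ w ≠ g ∧ (M.intervene w).sat u s'.event)

def CB12 (M : Model Vu Vv Du Dv) (K : Set (Ctx Du)) (g g' : PA Dv) (φ ψ : Event Dv) : Prop :=
  ∃ s s' : PA Dv, CB12With M K g g' s s' φ ψ

/-- Potential Borner contrastive explanation: CB1–CB4. -/
def PotBornerCE (M : Model Vu Vv Du Dv) (K : Set (Ctx Du)) (g g' : PA Dv) (φ ψ : Event Dv) : Prop :=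
  CB12 M K g g' φ ψ ∧
  (∃ u ∈ K, M.sat u (fun s => g.event s ∧ φ s ∧ ¬ ψ s)) ∧
  CH4 M K g g' φ ψ

/-- Actual Borner contrastive explanation: CB1–CB3, CB5. -/
def ActBornerCE (M : Model Vu Vv Du Dv) (K : Set (Ctx Du)) (g g' : PA Dv) (φ ψ : Event Dv) : Prop :=
  CB12 M K g g' φ ψ ∧
  (∃ u ∈ K, M.sat u (fun s => g.event s ∧ φ s ∧ ¬ ψ s)) ∧
  (∀ u ∈ K, M.sat u (fun s => g.event s ∧ φ s ∧ ¬ ψ s))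

end Causal

namespace OFF
open Causal

inductive XU | uL | uMD | uB
  deriving DecidableEq
inductive XV | L | MD | B | FF
  deriving DecidableEq

/-- The overdetermined forest fire model:
    L := U_L, MD := U_MD, B := U_B, FF := (MD ∧ B) ∨ L. -/
def M : Model XU XV (fun _ => Bool) (fun _ => Bool) where
  F i u s :=
    match i with
    | .L => u .uL
    | .MD => u .uMD
    | .B => u .uB
    | .FF => (s .MD && s .B) || s .L

/-- K = {u : u ⊨ U_L ∧ (¬U_MD ∨ U_B)}. -/
def K : Set (Ctx (fun _ : XU => Bool)) :=
  {u | u .uL = true ∧ (u .uMD = false ∨ u .uB = true)}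

/-- The event FF = 1. -/
def φFF : Event (fun _ : XV => Bool) := fun s => s .FF = true

/-- The event FF = 0. -/
def ψnFF : Event (fun _ : XV => Bool) := fun s => s .FF = false

/-- The conjunction L = 1. -/
def paL1 : PA (fun _ : XV => Bool) := fun i =>
  match i with | .L => some true | _ => none

/-- The conjunction L = 0. -/
def paL0 : PA (fun _ : XV => Bool) := fun i =>
  match i with | .L => some false | _ => none

/-- The conjunction MD = 1. -/
def paMD1 : PA (fun _ : XV => Bool) := fun i =>
  match i with | .MD => some true | _ => none

/-- The conjunction MD = 0. -/
def paMD0 : PA (fun _ : XV => Bool) := fun i =>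
  match i with | .MD => some false | _ => none

/-- The conjunction L = 1 ∧ MD = 0. -/
def paL1MD0 : PA (fun _ : XV => Bool) := fun i =>
  match i with | .L => some true | .MD => some false | _ => none

/-- The conjunction B = 1 ∧ MD = 1. -/
def paB1MD1 : PA (fun _ : XV => Bool) := fun i =>
  match i with | .B => some true | .MD => some true | _ => none

end OFF

section AuxOFF
open Causal OFF

/-- Explicit solution of the intervened forest-fire model. -/
def sol (g : PA (fun _ : XV => Bool)) (u : Ctx (fun _ : XU => Bool)) :
    World (fun _ : XV => Bool) :=
  fun i => match i with
  | .L => (g .L).getD (u .uL)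
  | .MD => (g .MD).getD (u .uMD)
  | .B => (g .B).getD (u .uB)
  | .FF => (g .FF).getD
      ((((g .MD).getD (u .uMD)) && ((g .B).getD (u .uB))) || ((g .L).getD (u .uL)))

lemma sol_solves (g : PA (fun _ : XV => Bool)) (u : Ctx (fun _ : XU => Bool)) :
    (M.intervene g).Solves u (sol g u) := by
  intro i; cases i <;> rfl

def sol0 (u : Ctx (fun _ : XU => Bool)) : World (fun _ : XV => Bool) :=
  fun i => match i with
  | .L => u .uL
  | .MD => u .uMD
  | .B => u .uB
  | .FF => (u .uMD && u .uB) || u .uL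

lemma sol0_solves (u : Ctx (fun _ : XU => Bool)) : M.Solves u (sol0 u) := by
  intro i; cases i <;> rfl

def u1 : Ctx (fun _ : XU => Bool) := fun _ => true
def u0 : Ctx (fun _ : XU => Bool) := fun x => match x with | .uMD => false | _ => true

lemma u1_mem : u1 ∈ K := ⟨rfl, Or.inr rfl⟩
lemma u0_mem : u0 ∈ K := ⟨rfl, Or.inl rfl⟩

lemma solve_eq (u : Ctx (fun _ : XU => Bool)) (s : World (fun _ : XV => Bool))
    (hs : M.Solves u s) :
    s XV.L = u XU.uL ∧ s XV.MD = u XU.uMD ∧ s XV.B = u XU.uB ∧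
      s XV.FF = ((s XV.MD && s XV.B) || s XV.L) :=
  ⟨hs XV.L, hs XV.MD, hs XV.B, hs XV.FF⟩

lemma sat_phi : ∀ u ∈ K, M.sat u φFF := by
  rintro u ⟨hL, -⟩ s hs
  obtain ⟨h1, -, -, h4⟩ := solve_eq u s hs
  show s XV.FF = true
  rw [h4, h1, hL]; simp

/-- The empty partial assignment. -/
def pa0 : PA (fun _ : XV => Bool) := fun _ => none

/-- L ← 0, MD ← 0. -/
def paL0MD0 : PA (fun _ : XV => Bool) := fun i =>
  match i with | .L => some false | .MD => some false | _ => none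

lemma ex2_main : EX2 M K paL1MD0 φFF := by
  intro u hu hg
  refine ⟨fun s hs => ⟨hg s hs, sat_phi u hu s hs⟩, ?_⟩
  refine ⟨pa0, paL0MD0, ?_, ?_, ?_⟩
  · intro i; cases i <;> simp [paL0MD0, paL1MD0]
  · intro s _ i v hv; exact absurd hv (by simp [pa0])
  · intro s hs hφ
    have h1 := hs XV.L
    have h2 := hs XV.MD
    have h4 := hs XV.FF
    simp [Model.intervene, PA.union, paL0MD0, pa0, M] at h1 h2 h4
    rw [h1, h2] at h4
    simp at h4
    exact absurd hφ (by simp [φFF, h4])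

lemma g_shape (h : PA (fun _ : XV => Bool)) (hsub : h.subset paL1MD0) :
    (h XV.L = none ∨ h XV.L = some true) ∧ (h XV.MD = none ∨ h XV.MD = some false) ∧
      h XV.B = none ∧ h XV.FF = none := by
  refine ⟨?_, ?_, ?_, ?_⟩
  · cases hL : h XV.L with
    | none => exact Or.inl rfl
    | some v => have := hsub XV.L v hL; simp [paL1MD0] at this; subst this; exact Or.inr rfl
  · cases hM : h XV.MD with
    | none => exact Or.inl rfl
    | some v => have := hsub XV.MD v hM; simp [paL1MD0] at this; subst this; exact Or.inr rfl
  · cases hB : h XV.B with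
    | none => rfl
    | some v => have := hsub XV.B v hB; simp [paL1MD0] at this
  · cases hF : h XV.FF with
    | none => rfl
    | some v => have := hsub XV.FF v hF; simp [paL1MD0] at this

end AuxOFF

/-- in the overdetermined forest fire model, L = 1 ∧ MD = 0 is an
    original HP explanation of FF = 1 relative to K. -/
theorem off_L1MD0_origExpl :
    Causal.OrigExpl OFF.M OFF.K OFF.paL1MD0 OFF.φFF := by
  open Causal OFF in
  refine ⟨sat_phi, ex2_main, ?_, ?_, ?_⟩
  · -- minimality
    rintro h ⟨hsub, hne⟩ hEX2
    obtain ⟨hL, hM, hB, hF⟩ := g_shape h hsub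
    rcases hM with hM | hM
    · -- h MD = none : use u1 (all true)
      have hg : M.sat u1 h.event := by
        intro s hs i v hv
        obtain ⟨e1, e2, e3, e4⟩ := solve_eq u1 s hs
        cases i
        · rcases hL with hL | hL
          · rw [hL] at hv; exact absurd hv (by simp)
          · rw [hL] at hv; injection hv with hv; rw [e1, ← hv]; rfl
        · rw [hM] at hv; exact absurd hv (by simp)
        · rw [hB] at hv; exact absurd hv (by simp)
        · rw [hF] at hv; exact absurd hv (by simp)
      obtain ⟨-, w, x', hdom, hw, hneg⟩ := hEX2 u1 u1_mem hg
      -- actual solution is all-true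
      have hwA := hw _ (sol0_solves u1)
      have hxM : x' XV.MD = none := by
        have := hdom XV.MD; rw [hM] at this; simpa using Option.not_isSome_iff_eq_none.mp (by simp [this])
      have hxF : x' XV.FF = none := by
        have := hdom XV.FF; rw [hF] at this; simpa using Option.not_isSome_iff_eq_none.mp (by simp [this])
      have hxB : x' XV.B = none := by
        have := hdom XV.B; rw [hB] at this; simpa using Option.not_isSome_iff_eq_none.mp (by simp [this])
      apply hneg _ (sol_solves (x'.union w) u1)
      show sol (x'.union w) u1 XV.FF = true
      have hMDv : ((x'.union w) XV.MD).getD (u1 XU.uMD) = true := by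
        simp only [PA.union, hxM, Option.orElse]
        cases hwM : w XV.MD with
        | none => rfl
        | some v => have := hwA XV.MD v hwM; simp [sol0, u1] at this; simp [this]
      have hBv : ((x'.union w) XV.B).getD (u1 XU.uB) = true := by
        simp only [PA.union, hxB, Option.orElse]
        cases hwB : w XV.B with
        | none => rfl
        | some v => have := hwA XV.B v hwB; simp [sol0, u1] at this; simp [this]
      show ((x'.union w) XV.FF).getD _ = true
      have hFFu : (x'.union w) XV.FF = w XV.FF := by
        simp only [PA.union, hxF, Option.orElse]
      rw [hFFu]
      cases hwF : w XV.FF with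
      | none => simp [hMDv, hBv]
      | some v => have := hwA XV.FF v hwF; simp [sol0, u1] at this; simp [this]
    · -- h MD = some false : then h L = none (else h = paL1MD0)
      have hL' : h XV.L = none := by
        rcases hL with hL | hL
        · exact hL
        · exfalso; apply hne; funext i
          cases i
          · rw [hL]; rfl
          · rw [hM]; rfl
          · rw [hB]; rfl
          · rw [hF]; rfl
      have hg : M.sat u0 h.event := by
        intro s hs i v hv
        obtain ⟨e1, e2, e3, e4⟩ := solve_eq u0 s hs
        cases i
        · rw [hL'] at hv; exact absurd hv (by simp)
        · rw [hM] at hv; injection hv with hv; rw [e2, ← hv]; rfl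
        · rw [hB] at hv; exact absurd hv (by simp)
        · rw [hF] at hv; exact absurd hv (by simp)
      obtain ⟨-, w, x', hdom, hw, hneg⟩ := hEX2 u0 u0_mem hg
      have hwA := hw _ (sol0_solves u0)
      have hxL : x' XV.L = none := by
        have := hdom XV.L; rw [hL'] at this; simpa using Option.not_isSome_iff_eq_none.mp (by simp [this])
      have hxF : x' XV.FF = none := by
        have := hdom XV.FF; rw [hF] at this; simpa using Option.not_isSome_iff_eq_none.mp (by simp [this])
      apply hneg _ (sol_solves (x'.union w) u0)
      show sol (x'.union w) u0 XV.FF = true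
      have hLv : ((x'.union w) XV.L).getD (u0 XU.uL) = true := by
        simp only [PA.union, hxL, Option.orElse]
        cases hwL : w XV.L with
        | none => rfl
        | some v => have := hwA XV.L v hwL; simp [sol0, u0] at this; simp [this]
      show ((x'.union w) XV.FF).getD _ = true
      have hFFu : (x'.union w) XV.FF = w XV.FF := by
        simp only [PA.union, hxF, Option.orElse]
      rw [hFFu]
      cases hwF : w XV.FF with
      | none => simp [hLv]
      | some v => have := hwA XV.FF v hwF; simp [sol0, u0] at this; simp [this]
  · -- EX4 first part : in u1 the actual MD = 1 ≠ 0
    refine ⟨u1, u1_mem, ?_⟩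
    intro s hs hge
    have := hge XV.MD false rfl
    have e2 := (solve_eq u1 s hs).2.1
    rw [this] at e2; exact absurd e2.symm (by simp [u1])
  · -- EX4 second part : in u0, L = 1 and MD = 0
    refine ⟨u0, u0_mem, ?_⟩
    intro s hs i v hv
    obtain ⟨e1, e2, -, -⟩ := solve_eq u0 s hs
    cases i
    · injection hv with hv; rw [e1, ← hv]; rfl
    · injection hv with hv; rw [e2, ← hv]; rfl
    · exact absurd hv (by simp [paL1MD0])
    · exact absurd hv (by simp [paL1MD0])
end

section
/- In the Suzy and Billy model with epistemic state K = {u : u ⊨ (U_BS ∧ U_BT) ∨ (U_BS ∧ U_SS ∧ U_ST)}, the conjunction BS = 1 ∧ SS = 1 is a modified HP explanation of BB = 1, but no potential Borner explanation of BB = 1 mentions the variable BS. -/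
namespace SB
open Causal

inductive XU | uSS | uST | uBS | uBT
  deriving DecidableEq
inductive XV | SS | ST | SH | BS | BT | BH | BB
  deriving DecidableEq

/-- The Suzy and Billy model: SS := U_SS, ST := U_ST, BS := U_BS, BT := U_BT,
    SH := SS ∧ ST, BH := (BS ∧ BT) ∧ ¬SH, BB := SH ∨ BH. -/
def M : Model XU XV (fun _ => Bool) (fun _ => Bool) where
  F i u s :=
    match i with
    | .SS => u .uSS
    | .ST => u .uST
    | .BS => u .uBS
    | .BT => u .uBT
    | .SH => s .SS && s .ST
    | .BH => (s .BS && s .BT) && !(s .SH)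
    | .BB => s .SH || s .BH

/-- K = {u : u ⊨ (U_BS ∧ U_BT) ∨ (U_BS ∧ U_SS ∧ U_ST)}. -/
def K : Set (Ctx (fun _ : XU => Bool)) :=
  {u | (u .uBS = true ∧ u .uBT = true) ∨ (u .uBS = true ∧ u .uSS = true ∧ u .uST = true)}

/-- The event BB = 1. -/
def φBB : Event (fun _ : XV => Bool) := fun s => s .BB = true

/-- The conjunction BS = 1 ∧ SS = 1. -/
def paBSSS : PA (fun _ : XV => Bool) := fun i =>
  match i with | .BS => some true | .SS => some true | _ => none

/-- The conjunction SS = 1 ∧ ST = 1. -/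
def paSSST : PA (fun _ : XV => Bool) := fun i =>
  match i with | .SS => some true | .ST => some true | _ => none

/-- The conjunction BT = 1. -/
def paBT : PA (fun _ : XV => Bool) := fun i =>
  match i with | .BT => some true | _ => none

end SB

/-!
In a context of `K` whichever rock hits, every intervention that keeps its path
(`SS, ST, SH, BB` for Suzy, `BS, BT, BH, BB` for Billy) at the actual values still breaks the
bottle, so by AC2 and AC3 the actual causes of `BB = 1` are the singletons on that path.
Hence `BS = 1 ∧ SS = 1` meets an actual cause in every context of `K`, whereas `SS = 1` alone
misses one where only Billy hits and `BS = 1` alone one where Suzy hits.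

For a potential Borner explanation `g` mentioning `BS`, the sufficient cause `q = g ∪ s` must
break the bottle even when every exogenous variable is `0`, without containing the smaller
sufficient causes `SH = 1`, `BH = 1`, `BB = 1`, `SS = ST = 1`. This forces `BS = BT = 1` into
`q` and leaves `q` true in a context where Suzy misses, where minimality gives
`q = (BS = 1 ∧ BT = 1)`. But then `q` holds when everybody throws, and there it meets no actual
cause.
-/

namespace Causal

variable {Vu Vv : Type} {Du : Vu → Type} {Dv : Vv → Type}

namespace PA

def empty : PA Dv := fun _ => none

@[simp]
theorem empty_apply (i : Vv) : (empty : PA Dv) i = none := rfl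

def single [DecidableEq Vv] (i : Vv) (v : Dv i) : PA Dv := Function.update empty i (some v)

theorem event_mono {g h : PA Dv} (hgh : g.subset h) {s : World Dv} (hs : h.event s) :
    g.event s :=
  fun i v hi => hs i v (hgh i v hi)

theorem eq_none_of_subset {g h : PA Dv} (hgh : g.subset h) {i : Vv} (hi : h i = none) :
    g i = none := by
  cases hg : g i with
  | none => rfl
  | some v => simpa [hi] using hgh i v hg

theorem subset_antisymm {g h : PA Dv} (hgh : g.subset h) (hhg : h.subset g) : g = h := by
  funext i
  cases hg : g i with
  | none => exact (eq_none_of_subset hhg hg).symm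
  | some v => exact (hgh i v hg).symm

theorem subset_union_left (g h : PA Dv) : g.subset (g.union h) :=
  fun i v hi => by simp [union, hi]

theorem union_apply_of_eq_none {g : PA Dv} {i : Vv} (hi : g i = none) (h : PA Dv) :
    g.union h i = h i := by
  simp [union, hi]

theorem sameDom.eq_none {g h : PA Dv} (hgh : g.sameDom h) {i : Vv} (hi : h i = none) :
    g i = none :=
  Option.not_isSome_iff_eq_none.mp fun hg => by simpa [hi] using (hgh i).mp hg

variable [DecidableEq Vv]

@[simp]
theorem single_apply_self (i : Vv) (v : Dv i) : single i v i = some v :=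
  Function.update_self ..

theorem single_apply_of_ne {i j : Vv} (h : j ≠ i) (v : Dv i) : single i v j = none :=
  Function.update_of_ne h ..

theorem forall_single_apply_eq_some {i : Vv} {v : Dv i} {P : (j : Vv) → Dv j → Prop} :
    (∀ j w, single i v j = some w → P j w) ↔ P i v := by
  refine ⟨fun h => h i v (single_apply_self i v), fun h j w hj => ?_⟩
  by_cases hji : j = i
  · subst hji
    rw [single_apply_self, Option.some.injEq] at hj
    exact hj ▸ h
  · simp [single_apply_of_ne hji] at hj

theorem single_subset_iff {i : Vv} {v : Dv i} {g : PA Dv} :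
    (single i v).subset g ↔ g i = some v :=
  forall_single_apply_eq_some

theorem event_single {i : Vv} {v : Dv i} {s : World Dv} : (single i v).event s ↔ s i = v :=
  forall_single_apply_eq_some

theorem sameDom_single (i : Vv) (v v' : Dv i) : (single i v).sameDom (single i v') := by
  intro j
  by_cases hji : j = i
  · subst hji; simp
  · simp [single_apply_of_ne hji]

theorem eq_empty_of_ssubset_single {h : PA Dv} {i : Vv} {v : Dv i}
    (hh : h.ssubset (single i v)) (j : Vv) : h j = none := by
  obtain ⟨hsub, hne⟩ := hh
  cases hj : h j with
  | none => rfl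
  | some w =>
    have hi : h i = some v :=
      forall_single_apply_eq_some (P := fun j w => h j = some w → h i = some v)
        |>.mpr id j w (hsub j w hj) hj
    exact absurd (subset_antisymm hsub (single_subset_iff.mpr hi)) hne

end PA

theorem Model.Solves.intervene {M : Model Vu Vv Du Dv} {u : Ctx Du} {s : World Dv}
    (hs : M.Solves u s) {w : PA Dv} (hw : w.event s) : (M.intervene w).Solves u s := by
  intro i
  show s i = (w i).getD (M.F i u s)
  cases hwi : w i with
  | none => exact hs i
  | some v => exact hw i v hwi

variable {M : Model Vu Vv Du Dv} {u : Ctx Du} {s : World Dv} {φ : Event Dv}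

theorem AC1.mono {g h : PA Dv} (hh : AC1 M u h φ) (hgh : g.subset h) : AC1 M u g φ :=
  fun s hs => ⟨PA.event_mono hgh (hh s hs).1, (hh s hs).2⟩

/-- Intervening only at actual values leaves the actual world a solution. -/
theorem not_AC2_of_forall_eq_none (hs : M.Solves u s) (hφ : φ s) {h : PA Dv}
    (hh : ∀ i, h i = none) : ¬ AC2 M u h φ := by
  rintro ⟨w, x', hdom, hw, hneg⟩
  have hxw : x'.union w = w := funext fun i => PA.union_apply_of_eq_none (hdom.eq_none (hh i)) w
  rw [hxw] at hneg
  exact hneg s (hs.intervene (hw s hs)) hφ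

theorem SuffCause.eq_of_subset {g h : PA Dv} (hh : SuffCause M u h φ) (hgh : g.subset h)
    (hg : SuffCauseCore M u g φ) : g = h := by
  by_contra hne
  exact hh.2 g ⟨hgh, hne⟩ hg

variable [DecidableEq Vv]

theorem WeakCause.actualCause_single (hs : M.Solves u s) {i : Vv} {v : Dv i}
    (h : WeakCause M u (PA.single i v) φ) : ActualCause M u (PA.single i v) φ :=
  ⟨h, fun _ hlt hw =>
    not_AC2_of_forall_eq_none hs (h.1 s hs).2 (PA.eq_empty_of_ssubset_single hlt) hw.2⟩

theorem ActualCause.eq_single {c : PA Dv} (hc : ActualCause M u c φ) {i : Vv} {v : Dv i}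
    (hi : c i = some v) (hw : WeakCause M u (PA.single i v) φ) : c = PA.single i v := by
  by_contra hne
  exact hc.2 _ ⟨PA.single_subset_iff.mpr hi, Ne.symm hne⟩ hw

/-- If `φ` survives every intervention keeping the variables of `S` at their actual values,
AC2 forces an actual cause to meet `S`, and then AC3 shrinks it to a singleton. -/
theorem ActualCause.exists_eq_single (hs : M.Solves u s) {S : Set Vv}
    (hweak : ∀ i ∈ S, WeakCause M u (PA.single i (s i)) φ)
    (hrobust : ∀ g : PA Dv, (∀ i ∈ S, ∀ v, g i = some v → v = s i) →
      ∃ t, (M.intervene g).Solves u t ∧ φ t)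
    {c : PA Dv} (hc : ActualCause M u c φ) : ∃ i ∈ S, c = PA.single i (s i) := by
  by_cases hS : ∃ i ∈ S, c i ≠ none
  · obtain ⟨i, hiS, hci⟩ := hS
    obtain ⟨v, hv⟩ := Option.ne_none_iff_exists'.mp hci
    obtain rfl : s i = v := (hc.1.1 s hs).1 i v hv
    exact ⟨i, hiS, hc.eq_single hv (hweak i hiS)⟩
  · push Not at hS
    obtain ⟨w, x', hdom, hw, hneg⟩ := hc.1.2
    obtain ⟨t, ht, hφt⟩ := hrobust (x'.union w) fun i hi v hv => by
      rw [PA.union_apply_of_eq_none (hdom.eq_none (hS i hi))] at hv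
      exact (hw s hs i v hv).symm
    exact (hneg t ht hφt).elim

theorem IntersectsActualCause.exists_mem (hs : M.Solves u s) {S : Set Vv}
    (hweak : ∀ i ∈ S, WeakCause M u (PA.single i (s i)) φ)
    (hrobust : ∀ g : PA Dv, (∀ i ∈ S, ∀ v, g i = some v → v = s i) →
      ∃ t, (M.intervene g).Solves u t ∧ φ t)
    {g : PA Dv} (hg : IntersectsActualCause M u g φ) : ∃ i ∈ S, g i = some (s i) := by
  obtain ⟨i, v, c, hgi, hci, hc⟩ := hg
  obtain ⟨j, hjS, rfl⟩ := hc.exists_eq_single hs hweak hrobust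
  exact PA.forall_single_apply_eq_some
    (P := fun i v => g i = some v → ∃ i ∈ S, g i = some (s i))
    |>.mpr (fun hgj => ⟨j, hjS, hgj⟩) i v hci hgi

end Causal

namespace SB

open Causal

abbrev PB := PA (fun _ : XV => Bool)
abbrev CB := Ctx (fun _ : XU => Bool)

def eval (g : PB) (u : CB) : World (fun _ : XV => Bool) :=
  let ss := (g .SS).getD (u .uSS)
  let st := (g .ST).getD (u .uST)
  let bs := (g .BS).getD (u .uBS)
  let bt := (g .BT).getD (u .uBT)
  let sh := (g .SH).getD (ss && st)
  let bh := (g .BH).getD (bs && bt && !sh)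
  fun
    | .SS => ss | .ST => st | .BS => bs | .BT => bt | .SH => sh | .BH => bh
    | .BB => (g .BB).getD (sh || bh)

def ctx (ss st bs bt : Bool) : CB
  | .uSS => ss | .uST => st | .uBS => bs | .uBT => bt

theorem solves_eval (g : PB) (u : CB) : (M.intervene g).Solves u (eval g u) := by
  intro i; cases i <;> rfl

theorem solves_eval_empty (u : CB) : M.Solves u (eval PA.empty u) :=
  solves_eval PA.empty u

theorem eq_eval_of_solves {g : PB} {u : CB} {s : World (fun _ : XV => Bool)}
    (h : (M.intervene g).Solves u s) : s = eval g u := by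
  have hSS := h .SS; have hST := h .ST; have hBS := h .BS; have hBT := h .BT
  have hSH := h .SH; have hBH := h .BH; have hBB := h .BB
  simp only [Model.intervene, M] at hSS hST hBS hBT hSH hBH hBB
  funext i; cases i <;> simp [eval, *]

theorem sat_intervene_iff {g : PB} {u : CB} {φ : Event (fun _ : XV => Bool)} :
    (M.intervene g).sat u φ ↔ φ (eval g u) :=
  ⟨fun h => h _ (solves_eval g u), fun h _ hs => eq_eval_of_solves hs ▸ h⟩

theorem sat_iff {u : CB} {φ : Event (fun _ : XV => Bool)} : M.sat u φ ↔ φ (eval PA.empty u) :=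
  sat_intervene_iff (g := PA.empty)

theorem φBB_eval_empty {u : CB} (hu : u ∈ K) : φBB (eval PA.empty u) := by
  rcases hu with ⟨h1, h2⟩ | ⟨h1, h2, h3⟩ <;> cases hSS : u .uSS <;> simp [φBB, eval, *]

/-- At a context of `K` the actual causes of `BB = 1` are exactly the singletons on the path of
the rock that hits. -/
def causeVars (u : CB) : Set XV :=
  if u .uSS && u .uST then {.SS, .ST, .SH, .BB} else {.BS, .BT, .BH, .BB}

theorem weakCause_single {u : CB} (hu : u ∈ K) {i : XV} (hi : i ∈ causeVars u) :
    WeakCause M u (PA.single i (eval PA.empty u i)) φBB := by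
  have hφ := φBB_eval_empty hu
  unfold causeVars at hi
  -- the contingency holds the other rock's hit at its actual value 0
  split_ifs at hi with hsuzy
  · simp only [Bool.and_eq_true] at hsuzy
    refine ⟨sat_iff.mpr ⟨PA.event_single.mpr rfl, hφ⟩,
      PA.single .BH false, PA.single i false, PA.sameDom_single _ _ _,
      sat_iff.mpr (PA.event_single.mpr (by simp [eval, hsuzy])), sat_intervene_iff.mpr ?_⟩
    rcases hi with rfl | rfl | rfl | rfl <;> simp [φBB, eval, PA.union, PA.single]
  · refine ⟨sat_iff.mpr ⟨PA.event_single.mpr rfl, hφ⟩,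
      PA.single .SH false, PA.single i false, PA.sameDom_single _ _ _,
      sat_iff.mpr (PA.event_single.mpr (by simpa [eval] using hsuzy)), sat_intervene_iff.mpr ?_⟩
    rcases hi with rfl | rfl | rfl | rfl <;> simp [φBB, eval, PA.union, PA.single]

theorem φBB_eval_of_agreeOn_causeVars {u : CB} (hu : u ∈ K) {g : PB}
    (hg : ∀ i ∈ causeVars u, ∀ v, g i = some v → v = eval PA.empty u i) :
    φBB (eval g u) := by
  have key : ∀ i ∈ causeVars u, (g i).getD (eval PA.empty u i) = eval PA.empty u i :=
    fun i hi => by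
      cases h : g i with
      | none => rfl
      | some v => exact hg i hi v h
  unfold causeVars at key
  split_ifs at key with hsuzy
  · simp only [Bool.and_eq_true] at hsuzy
    have hSS := key .SS (by simp); have hST := key .ST (by simp)
    have hSH := key .SH (by simp); have hBB := key .BB (by simp)
    simp [eval, hsuzy] at hSS hST hSH hBB
    simp [φBB, eval, hsuzy, hSS, hST, hSH, hBB]
  · obtain ⟨hBS', hBT'⟩ : u .uBS = true ∧ u .uBT = true := by
      rcases hu with h | ⟨-, h2, h3⟩
      · exact h
      · simp [h2, h3] at hsuzy
    have hBS := key .BS (by simp); have hBT := key .BT (by simp)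
    have hBH := key .BH (by simp); have hBB := key .BB (by simp)
    simp [eval, hBS', hBT', hsuzy] at hBS hBT hBH hBB
    simp only [φBB, eval, hBS', hBT', hBS, hBT, Bool.true_and]
    cases (g .SH).getD ((g .SS).getD (u .uSS) && (g .ST).getD (u .uST)) <;> simp [hBH, hBB]

theorem actualCause_single {u : CB} (hu : u ∈ K) {i : XV} (hi : i ∈ causeVars u) :
    ActualCause M u (PA.single i (eval PA.empty u i)) φBB :=
  (weakCause_single hu hi).actualCause_single (solves_eval_empty u)

theorem exists_mem_causeVars_of_intersects {u : CB} (hu : u ∈ K) {g : PB}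
    (hg : IntersectsActualCause M u g φBB) :
    ∃ i ∈ causeVars u, g i = some (eval PA.empty u i) :=
  hg.exists_mem (solves_eval_empty u) (fun _ => weakCause_single hu)
    (fun g' hg' => ⟨_, solves_eval g' u, φBB_eval_of_agreeOn_causeVars hu hg'⟩)

theorem event_paBSSS {u : CB} (hSS : u .uSS = true) (hBS : u .uBS = true) :
    paBSSS.event (eval PA.empty u) := fun i v hi => by
  cases i <;> simp [paBSSS] at hi <;> simp [eval, ← hi, hSS, hBS]

theorem EX1'_paBSSS : EX1' M K paBSSS φBB := by
  intro u hu
  refine ⟨fun hsat => ?_, sat_intervene_iff.mpr ?_⟩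
  · obtain ⟨hev, -⟩ := sat_iff.mp hsat
    have hSS : u .uSS = true := hev .SS true rfl
    have hBS : u .uBS = true := hev .BS true rfl
    by_cases hsuzy : (u .uSS && u .uST) = true
    · exact ⟨.SS, true, _, rfl, by simp [eval, hSS],
        actualCause_single (i := .SS) hu (by simp [causeVars, hsuzy])⟩
    · exact ⟨.BS, true, _, rfl, by simp [eval, hBS],
        actualCause_single (i := .BS) hu (by simp [causeVars, hsuzy])⟩
  · rcases hu with ⟨h1, h2⟩ | ⟨h1, h2, h3⟩ <;> cases u .uST <;>
      simp [φBB, eval, paBSSS, *]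

theorem not_EX1'_of_ssubset_paBSSS {h : PB} (hh : h.ssubset paBSSS) : ¬ EX1' M K h φBB := by
  obtain ⟨hsub, hne⟩ := hh
  intro hex
  have hdom : ∀ i v, h i = some v → i = .SS ∨ i = .BS := fun i v hi => by
    have := hsub i v hi
    cases i <;> simp [paBSSS] at this ⊢
  have hcause : ∀ u ∈ K, u .uSS = true → u .uBS = true →
      ∃ i ∈ causeVars u, h i = some (eval PA.empty u i) := by
    intro u hu hSS hBS
    exact exists_mem_causeVars_of_intersects hu ((hex u hu).1
      (sat_iff.mpr ⟨PA.event_mono hsub (event_paBSSS hSS hBS), φBB_eval_empty hu⟩))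
  obtain ⟨i, hi, hhi⟩ := hcause (ctx true true true true) (Or.inl ⟨rfl, rfl⟩) rfl rfl
  obtain ⟨j, hj, hhj⟩ := hcause (ctx true false true true) (Or.inl ⟨rfl, rfl⟩) rfl rfl
  obtain rfl | rfl := hdom i _ hhi <;> obtain rfl | rfl := hdom j _ hhj <;>
    simp [causeVars, ctx] at hi hj
  refine hne (funext fun k => ?_)
  cases k <;> first | exact hhi | exact hhj | exact PA.eq_none_of_subset hsub rfl

theorem modExpl_paBSSS : ModExpl M K paBSSS φBB :=
  ⟨EX1'_paBSSS, fun _ => not_EX1'_of_ssubset_paBSSS, ctx true true true true,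
    Or.inl ⟨rfl, rfl⟩, sat_iff.mpr ⟨event_paBSSS rfl rfl, rfl⟩⟩

def paBSBT : PB := fun i =>
  match i with | .BS => some true | .BT => some true | _ => none

theorem suffCauseCore_of_subset {u : CB} (hu : u ∈ K) {g h : PB} (hh : AC1 M u h φBB)
    (hgh : g.subset h) {i : XV} (hi : i ∈ causeVars u) (hgi : g i ≠ none)
    (hsuff : ∀ u', φBB (eval g u')) : SuffCauseCore M u g φBB := by
  obtain ⟨v, hv⟩ := Option.ne_none_iff_exists'.mp hgi
  have hact : eval PA.empty u i = v := (sat_iff.mp (hh.mono hgh)).1 i v hv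
  exact ⟨hh.mono hgh,
    ⟨i, v, _, hv, hact ▸ PA.single_apply_self _ _, actualCause_single hu hi⟩,
    fun u' => sat_intervene_iff.mpr (hsuff u')⟩

theorem eq_some_true_of_φBB_eval_ctx_false {q : PB}
    (h : φBB (eval q (ctx false false false false))) (hSH : q .SH ≠ some true)
    (hBH : q .BH ≠ some true) (hBB : q .BB ≠ some true)
    (hSSST : ¬ (q .SS = some true ∧ q .ST = some true)) :
    q .BS = some true ∧ q .BT = some true ∧ q .BH = none ∧ q .BB = none := by
  have hsh : (q .SH).getD ((q .SS).getD false && (q .ST).getD false) = false := by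
    rcases hSS : q .SS with _ | _ | _ <;> rcases hST : q .ST with _ | _ | _ <;>
      rcases hSH' : q .SH with _ | _ | _ <;> simp_all
  simp only [φBB, eval, ctx, hsh, Bool.false_or, Bool.not_false, Bool.and_true] at h
  rcases hBB' : q .BB with _ | _ | _ <;> rcases hBH' : q .BH with _ | _ | _ <;>
    simp_all [Option.getD_eq_iff]

/-- Each of `SH = 1`, `BH = 1`, `BB = 1` and `SS = ST = 1` is a sufficient cause wherever it
holds, and is strictly smaller than `q` because it omits `BS`. -/
theorem ne_some_true_of_suffCause {u : CB} (hu : u ∈ K) {q : PB} (hq : SuffCause M u q φBB)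
    (hBS : q .BS ≠ none) : q .SH ≠ some true ∧ q .BH ≠ some true ∧ q .BB ≠ some true ∧
      ¬ (q .SS = some true ∧ q .ST = some true) := by
  have hact : q.event (eval PA.empty u) := (sat_iff.mp hq.1.1).1
  have hsmaller : ∀ g : PB, g.subset q → g .BS = none →
      ∀ i ∈ causeVars u, g i ≠ none → (∀ u', φBB (eval g u')) → False :=
    fun g hgq hgBS i hi hgi hsuff =>
    hBS (hq.eq_of_subset hgq (suffCauseCore_of_subset hu hq.1.1 hgq hi hgi hsuff) ▸ hgBS)
  have hsingle : ∀ i ∈ causeVars u, i ≠ .BS →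
      (∀ u', φBB (eval (PA.single i true) u')) → q i ≠ some true :=
    fun i hi hiBS hsuff hqi =>
    hsmaller _ (PA.single_subset_iff.mpr hqi) (PA.single_apply_of_ne hiBS.symm _) i hi (by simp)
      hsuff
  refine ⟨fun hSH => ?_, fun hBH => ?_,
    hsingle .BB ?_ (by decide) fun u' => by simp [φBB, eval, PA.single],
    fun ⟨hSS, hST⟩ => ?_⟩
  · have hsuzy := hact .SH true hSH
    simp [eval] at hsuzy
    exact hsingle .SH (by simp [causeVars, hsuzy]) (by decide)
      (fun u' => by simp [φBB, eval, PA.single]) hSH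
  · have hmiss := hact .BH true hBH
    simp [eval] at hmiss
    exact hsingle .BH (by rcases hmiss.2 with h | h <;> simp [causeVars, h]) (by decide)
      (fun u' => by simp [φBB, eval, PA.single]) hBH
  · unfold causeVars; split_ifs <;> simp
  · have hsuzy : eval PA.empty u .SS = true ∧ eval PA.empty u .ST = true :=
      ⟨hact .SS true hSS, hact .ST true hST⟩
    simp [eval] at hsuzy
    refine hsmaller paSSST (fun i v hi => ?_) rfl .SS (by simp [causeVars, hsuzy])
      (by simp [paSSST]) fun u' => by simp [φBB, eval, paSSST]
    cases i <;> simp [paSSST] at hi <;> simp [← hi, hSS, hST]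

/-- Setting `U_SS`, `U_ST` to the values `q` fixes keeps `q` true, and Suzy misses because `q`
does not fix both `SS` and `ST` to `1`. -/
theorem exists_suzy_misses_of_suffCause {u : CB} (hu : u ∈ K) {q : PB} (hq : SuffCause M u q φBB)
    (hBS : q .BS ≠ none) : ∃ u' ∈ K, (u' .uSS && u' .uST) = false ∧
      q.event (eval PA.empty u') ∧ paBSBT.subset q := by
  obtain ⟨hSH, hBH, hBB, hSSST⟩ := ne_some_true_of_suffCause hu hq hBS
  obtain ⟨hBS', hBT', hBH', hBB'⟩ := eq_some_true_of_φBB_eval_ctx_false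
    (sat_intervene_iff.mp (hq.1.2.2 _)) hSH hBH hBB hSSST
  have hmiss : ((q .SS).getD false && (q .ST).getD false) = false := by
    rcases hSS : q .SS with _ | _ | _ <;> rcases hST : q .ST with _ | _ | _ <;> simp_all
  refine ⟨ctx ((q .SS).getD false) ((q .ST).getD false) true true, Or.inl ⟨rfl, rfl⟩, hmiss,
    fun i v hi => ?_, fun i v hi => ?_⟩
  · cases i <;> simp_all [eval, ctx]
  · cases i <;> simp [paBSBT] at hi <;> simp [← hi, hBS', hBT']

theorem eq_paBSBT_of_suffCause {u : CB} (hu : u ∈ K) (hmiss : (u .uSS && u .uST) = false)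
    {q : PB} (hq : SuffCause M u q φBB) (hsub : paBSBT.subset q) : q = paBSBT := by
  refine (hq.eq_of_subset hsub (suffCauseCore_of_subset hu hq.1.1 hsub (i := .BS)
    (by simp [causeVars, hmiss]) (by simp [paBSBT])
    fun u' => by cases h : u' .uSS <;> simp [φBB, eval, paBSBT, h])).symm

theorem not_suffCause_paBSBT : ¬ SuffCause M (ctx true true true true) paBSBT φBB := by
  intro h
  obtain ⟨i, hi, hpa⟩ := exists_mem_causeVars_of_intersects (Or.inl ⟨rfl, rfl⟩) h.1.2.1
  simp [causeVars, ctx] at hi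
  rcases hi with rfl | rfl | rfl | rfl <;> simp [paBSBT] at hpa

theorem eq_none_BS_of_potBorner {g : PB} (hg : PotBorner M K g φBB) : g .BS = none := by
  obtain ⟨⟨s, -, hE2⟩, ⟨u, hu, hgu⟩, -⟩ := hg
  by_contra hBS
  have hgq := PA.subset_union_left g s
  have hsuff : ∀ u ∈ K, (g.union s).event (eval PA.empty u) →
      SuffCause M u (g.union s) φBB :=
    fun u hu hq => (hE2 u hu).1 (sat_iff.mpr (PA.event_mono hgq hq))
  have hqBS : g.union s .BS ≠ none := fun h => hBS (PA.eq_none_of_subset hgq h)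
  obtain ⟨u', hu', hmiss, hqu', hsub⟩ :=
    exists_suzy_misses_of_suffCause hu ((hE2 u hu).1 (sat_iff.mpr (sat_iff.mp hgu).1)) hqBS
  have hq : g.union s = paBSBT := eq_paBSBT_of_suffCause hu' hmiss (hsuff u' hu' hqu') hsub
  have hpa : paBSBT.event (eval PA.empty (ctx true true true true)) := fun i v hi => by
    cases i <;> simp [paBSBT] at hi <;> simp [eval, ctx, ← hi]
  rw [hq] at hsuff
  exact not_suffCause_paBSBT (hsuff _ (Or.inl ⟨rfl, rfl⟩) hpa)

end SB

/-- in the Suzy and Billy model, BS = 1 ∧ SS = 1 is a modified HP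
    explanation of BB = 1, but no potential Borner explanation of BB = 1 mentions
    the variable BS. -/
theorem sb_modExpl_vs_borner :
    Causal.ModExpl SB.M SB.K SB.paBSSS SB.φBB ∧
    ∀ g : Causal.PA (fun _ : SB.XV => Bool),
      Causal.PotBorner SB.M SB.K g SB.φBB → g SB.XV.BS = none :=
  ⟨SB.modExpl_paBSSS, fun _ => SB.eq_none_BS_of_potBorner⟩
end

section
/- Suppose (M, u) ⊨ ¬φ ∨ ¬ψ for every u ∈ K. If ⟨X = x, X = x'⟩ satisfies the modular conditions CE1'–CE4' under original HP explanations, then (M, u) ⊨ φ ∧ ¬ψ for every u ∈ K (i.e., Miller's condition CE1 holds). -/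
/-- under incompatibility of fact and foil, the modular conditions
    CE1'–CE4' under original HP explanations imply Miller's condition CE1. -/
theorem modular_implies_CE1 {Vu Vv : Type} {Du : Vu → Type} {Dv : Vv → Type}
    (M : Causal.Model Vu Vv Du Dv) (hM : M.Acyclic) (K : Set (Causal.Ctx Du))
    (g g' : Causal.PA Dv) (φ ψ : Causal.Event Dv)
    (hinc : ∀ u ∈ K, M.sat u (fun s => ¬ φ s ∨ ¬ ψ s))
    (h : Causal.Modular Causal.OrigExpl M K g g' φ ψ) :
    ∀ u ∈ K, M.sat u (fun s => φ s ∧ ¬ ψ s) := by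
  obtain ⟨⟨_, ⟨hφ, _, hexpl⟩, _⟩, _⟩ := h
  intro u hu s hs
  have hφs : φ s := hexpl.1 u hu s hs
  have := hinc u hu s hs
  exact ⟨hφs, fun hψ => by rcases this with h1 | h2 <;> [exact h1 hφs; exact h2 hψ]⟩
end
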